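/- arXiv:1904.12367 — 3 statements merged into one kernel-verified Lean document; each statement's English description precedes it below -/
import Mathlib

section
/- Let U be a locally uniformly bounded strongly continuous evolution family on X with time interval J, and let G : J → L(X) be strongly continuous and uniformly bounded on compact subintervals. If S and T are two strongly continuous, locally exponentially bounded evolution families both satisfying the integral equation W(t,τ)z = U(t,τ)z + ∫_τ^t U(t,s) G(s) W(s,τ)z ds for all z ∈ X and τ ≤ t in J, then S = T. -/
open Set

/-- uniqueness of strongly continuous, locally bounded solutions of the
perturbation integral equation `W(t,τ)z = U(t,τ)z + ∫_τ^t U(t,s) G(s) W(s,τ)z ds`. -/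
theorem perturbation_integral_equation_unique
    {X : Type*} [NormedAddCommGroup X] [InnerProductSpace ℝ X] [CompleteSpace X]
    (a b : ℝ) (hab : a ≤ b)
    (U S T : ℝ → ℝ → X →L[ℝ] X) (G : ℝ → X →L[ℝ] X)
    (MU : ℝ) (hUb : ∀ t s, a ≤ s → s ≤ t → t ≤ b → ‖U t s‖ ≤ MU)
    (K : ℝ) (hGb : ∀ s ∈ Icc a b, ‖G s‖ ≤ K)
    (hGc : ∀ z : X, ContinuousOn (fun s => G s z) (Icc a b))
    (hSc : ∀ z : X, ∀ τ ∈ Icc a b, ContinuousOn (fun s => S s τ z) (Icc a b))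
    (hTc : ∀ z : X, ∀ τ ∈ Icc a b, ContinuousOn (fun s => T s τ z) (Icc a b))
    (hSic : ∀ z : X, ∀ τ ∈ Icc a b, ∀ t ∈ Icc a b,
      ContinuousOn (fun s => U t s (G s (S s τ z))) (Icc a b))
    (hTic : ∀ z : X, ∀ τ ∈ Icc a b, ∀ t ∈ Icc a b,
      ContinuousOn (fun s => U t s (G s (T s τ z))) (Icc a b))
    (hSeq : ∀ z : X, ∀ τ ∈ Icc a b, ∀ t ∈ Icc a b, τ ≤ t →
      S t τ z = U t τ z + ∫ s in τ..t, U t s (G s (S s τ z)))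
    (hTeq : ∀ z : X, ∀ τ ∈ Icc a b, ∀ t ∈ Icc a b, τ ≤ t →
      T t τ z = U t τ z + ∫ s in τ..t, U t s (G s (T s τ z))) :
    ∀ τ ∈ Icc a b, ∀ t ∈ Icc a b, τ ≤ t → S t τ = T t τ := by
  intro τ hτ t ht hτt
  ext z
  have hMU : 0 ≤ MU := le_trans (norm_nonneg _) (hUb b b hab le_rfl le_rfl)
  have hK : 0 ≤ K := le_trans (norm_nonneg _) (hGb a ⟨le_rfl, hab⟩)
  set C : ℝ := MU * K with hC
  have hC0 : 0 ≤ C := mul_nonneg hMU hK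
  -- the difference and its norm
  set f : ℝ → ℝ := fun s => ‖S s τ z - T s τ z‖ with hfdef
  have hfc : ContinuousOn f (Icc a b) :=
    ((hSc z τ hτ).sub (hTc z τ hτ)).norm
  -- clamp to [a,b]
  set c : ℝ → ℝ := fun s => max a (min s b) with hcdef
  have hcc : Continuous c := continuous_const.max (continuous_id.min continuous_const)
  have hcmem : ∀ s, c s ∈ Icc a b := fun s =>
    ⟨le_max_left _ _, max_le hab (min_le_right _ _)⟩
  have hceq : ∀ s ∈ Icc a b, c s = s := fun s hs => by
    simp only [hcdef, min_eq_left hs.2, max_eq_right hs.1]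
  set F : ℝ → ℝ := fun s => f (c s) with hFdef
  have hFc : Continuous F := hfc.comp_continuous hcc hcmem
  have hFeq : ∀ s ∈ Icc a b, F s = f s := fun s hs => by
    simp only [hFdef]; rw [hceq s hs]
  have hF0 : ∀ s, 0 ≤ F s := fun s => norm_nonneg _
  -- the primitive
  set g : ℝ → ℝ := fun u => ∫ s in τ..u, F s with hgdef
  have hgderiv : ∀ u : ℝ, HasDerivAt g (F u) u := fun u =>
    (hFc.integral_hasStrictDerivAt τ u).hasDerivAt
  have hsub : ∀ u ∈ Icc τ t, Icc τ u ⊆ Icc a b := fun u hu =>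
    Icc_subset_Icc hτ.1 (le_trans hu.2 ht.2)
  -- key integral inequality: f u ≤ C * g u for u ∈ [τ, t]
  have key : ∀ u ∈ Icc τ t, f u ≤ C * g u := by
    intro u hu
    have huab : u ∈ Icc a b := ⟨le_trans hτ.1 hu.1, le_trans hu.2 ht.2⟩
    have huIcc : uIcc τ u = Icc τ u := uIcc_of_le hu.1
    have hSI : IntervalIntegrable (fun s => U u s (G s (S s τ z)))
        MeasureTheory.volume τ u :=
      (((hSic z τ hτ u huab).mono (by rw [huIcc]; exact hsub u hu))).intervalIntegrable
    have hTI : IntervalIntegrable (fun s => U u s (G s (T s τ z)))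
        MeasureTheory.volume τ u :=
      (((hTic z τ hτ u huab).mono (by rw [huIcc]; exact hsub u hu))).intervalIntegrable
    have hdiff : S u τ z - T u τ z
        = ∫ s in τ..u, (U u s (G s (S s τ z)) - U u s (G s (T s τ z))) := by
      rw [hSeq z τ hτ u huab hu.1, hTeq z τ hτ u huab hu.1,
        intervalIntegral.integral_sub hSI hTI]
      abel
    have hnorm : f u ≤ ∫ s in τ..u,
        ‖U u s (G s (S s τ z)) - U u s (G s (T s τ z))‖ := by
      rw [hfdef]; simp only; rw [hdiff]
      exact intervalIntegral.norm_integral_le_integral_norm hu.1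
    have hptb : ∀ s ∈ Icc τ u,
        ‖U u s (G s (S s τ z)) - U u s (G s (T s τ z))‖ ≤ C * f s := by
      intro s hs
      have hsab : s ∈ Icc a b := hsub u hu hs
      have h1 : U u s (G s (S s τ z)) - U u s (G s (T s τ z))
          = U u s (G s (S s τ z - T s τ z)) := by
        rw [map_sub, map_sub]
      rw [h1]
      calc ‖U u s (G s (S s τ z - T s τ z))‖
          ≤ ‖U u s‖ * ‖G s (S s τ z - T s τ z)‖ := (U u s).le_opNorm _
        _ ≤ ‖U u s‖ * (‖G s‖ * ‖S s τ z - T s τ z‖) := by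
            exact mul_le_mul_of_nonneg_left ((G s).le_opNorm _) (norm_nonneg _)
        _ ≤ MU * (K * f s) := by
            apply mul_le_mul (hUb u s hsab.1 hs.2 huab.2) _ (by positivity) hMU
            exact mul_le_mul_of_nonneg_right (hGb s hsab) (norm_nonneg _)
        _ = C * f s := by ring
    have hnI : IntervalIntegrable (fun s =>
        ‖U u s (G s (S s τ z)) - U u s (G s (T s τ z))‖) MeasureTheory.volume τ u :=
      (hSI.sub hTI).norm
    have hfI : IntervalIntegrable (fun s => C * f s) MeasureTheory.volume τ u :=
      ((hfc.mono (by rw [huIcc]; exact hsub u hu)).const_smul C).intervalIntegrable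
    have hmono : (∫ s in τ..u, ‖U u s (G s (S s τ z)) - U u s (G s (T s τ z))‖)
        ≤ ∫ s in τ..u, C * f s :=
      intervalIntegral.integral_mono_on hu.1 hnI hfI hptb
    have hgu : (∫ s in τ..u, C * f s) = C * g u := by
      rw [hgdef]
      simp only
      rw [← intervalIntegral.integral_const_mul]
      apply intervalIntegral.integral_congr
      intro s hs
      rw [huIcc] at hs
      show C * f s = C * F s
      rw [hFeq s (hsub u hu hs)]
    calc f u ≤ _ := hnorm
      _ ≤ _ := hmono
      _ = C * g u := hgu
  -- Grönwall: g ≡ 0 on [τ, t]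
  have hgle : ∀ x ∈ Icc τ t, ‖g x‖ ≤ gronwallBound 0 C 0 (x - τ) := by
    apply norm_le_gronwallBound_of_norm_deriv_right_le
      (fun x _ => (hgderiv x).continuousAt.continuousWithinAt)
      (fun x _ => (hgderiv x).hasDerivWithinAt)
    · simp [hgdef]
    · intro x hx
      have hx' : x ∈ Icc τ t := ⟨hx.1, le_of_lt hx.2⟩
      have hFx : F x = f x := hFeq x ⟨le_trans hτ.1 hx.1, le_trans hx'.2 ht.2⟩
      rw [Real.norm_eq_abs, abs_of_nonneg (hF0 x), hFx, add_zero]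
      calc f x ≤ C * g x := key x hx'
        _ ≤ C * ‖g x‖ := mul_le_mul_of_nonneg_left (le_abs_self _) hC0
        _ = C * ‖g x‖ := rfl
  have hgt : g t = 0 := by
    have := hgle t ⟨hτt, le_rfl⟩
    rw [gronwallBound_ε0_δ0] at this
    exact norm_le_zero_iff.mp this
  have hft : f t ≤ 0 := by
    have := key t ⟨hτt, le_rfl⟩
    rwa [hgt, mul_zero] at this
  have : S t τ z - T t τ z = 0 := by
    rw [← norm_le_zero_iff]; exact hft
  exact sub_eq_zero.mp this
end

section
/- Suppose a system with operators A₋₁, B, C̄, D is scattering passive, i.e., 2 Re⟨A₋₁x + Bu, x⟩ ≤ ‖u‖² − ‖C̄x + Du‖² whenever A₋₁x + Bu ∈ X. Let (u, x, y) be a classical trajectory of the perturbed system P(t)ẋ(t) = (A₋₁ + P(t)G(t))x(t) + Bu(t), y(t) = C̄x(t) + Du(t), with P(t) = P(t)* ≥ 0 strongly C¹. Then for all t in the time interval: d/dt ⟨P(t)x(t), x(t)⟩ ≤ ⟨Ṗ(t)x(t), x(t)⟩ + ‖u(t)‖² − ‖y(t)‖² + 2 Re⟨P(t)x(t), G(t)x(t)⟩.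 -/
open Set
open scoped RealInnerProductSpace

/-- power inequality for a classical trajectory of the left-perturbed system
`P(t)ẋ = (A₋₁ + P(t)G(t))x + Bu`, `y = C̄x + Du`, where the underlying time-invariant
system is scattering passive. Any derivative `d` of `t ↦ ⟨P(t)x(t), x(t)⟩` satisfies
`d ≤ ⟨Ṗ(t)x(t), x(t)⟩ + ‖u(t)‖² − ‖y(t)‖² + 2⟨P(t)x(t), G(t)x(t)⟩`. -/
theorem power_inequality_left_perturbed
    {X U Y Xm1 : Type*}
    [NormedAddCommGroup X] [InnerProductSpace ℝ X] [CompleteSpace X]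
    [NormedAddCommGroup U] [InnerProductSpace ℝ U] [CompleteSpace U]
    [NormedAddCommGroup Y] [InnerProductSpace ℝ Y] [CompleteSpace Y]
    [NormedAddCommGroup Xm1] [NormedSpace ℝ Xm1] [CompleteSpace Xm1]
    (ι : X →L[ℝ] Xm1) (hι : Function.Injective ι)
    (Am1 : X →L[ℝ] Xm1) (B : U →L[ℝ] Xm1)
    (Cb : X →ₗ[ℝ] Y) (D : U →L[ℝ] Y)
    -- scattering passivity of the time-invariant system:
    (hpassive : ∀ (x₀ : X) (u₀ : U) (w : X), ι w = Am1 x₀ + B u₀ →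
      2 * ⟪w, x₀⟫ ≤ ‖u₀‖ ^ 2 - ‖Cb x₀ + D u₀‖ ^ 2)
    (τ T : ℝ) (hτT : τ < T)
    (P P' G : ℝ → X →L[ℝ] X)
    (hsa : ∀ t ∈ Icc τ T, ∀ u v : X, ⟪P t u, v⟫ = ⟪u, P t v⟫)
    (hpos : ∀ t ∈ Icc τ T, ∀ z : X, (0:ℝ) ≤ ⟪P t z, z⟫)
    (hP : ∀ z : X, ∀ t ∈ Icc τ T, HasDerivWithinAt (fun s => P s z) (P' t z) (Icc τ T) t)
    (hP'c : ∀ z : X, ContinuousOn (fun t => P' t z) (Icc τ T))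
    (hGc : ∀ z : X, ContinuousOn (fun t => G t z) (Icc τ T))
    (x x' : ℝ → X) (u : ℝ → U) (y : ℝ → Y)
    (hx : ∀ t ∈ Icc τ T, HasDerivWithinAt x (x' t) (Icc τ T) t)
    (hu : ContinuousOn u (Icc τ T)) (hy : ContinuousOn y (Icc τ T))
    -- the state equation P(t)ẋ(t) = (A₋₁ + P(t)G(t))x(t) + Bu(t), read in X₋₁:
    (heq : ∀ t ∈ Icc τ T,
      ι (P t (x' t)) = Am1 (x t) + ι (P t (G t (x t))) + B (u t))
    -- the output equation y(t) = C̄x(t) + Du(t):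
    (hout : ∀ t ∈ Icc τ T, y t = Cb (x t) + D (u t)) :
    ∀ t ∈ Icc τ T, ∀ d : ℝ,
      HasDerivWithinAt (fun s => ⟪P s (x s), x s⟫) d (Icc τ T) t →
      d ≤ ⟪P' t (x t), x t⟫ + ‖u t‖ ^ 2 - ‖y t‖ ^ 2 + 2 * ⟪P t (x t), G t (x t)⟫ := by
  intro t ht d hd
  -- uniform bound on ‖P s‖ over the interval, via Banach–Steinhaus
  obtain ⟨M, hM⟩ : ∃ M, ∀ s : Icc τ T, ‖P (s : ℝ)‖ ≤ M := by
    apply banach_steinhaus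
    intro z
    have hc : ContinuousOn (fun s => P s z) (Icc τ T) := fun s hs =>
      (hP z s hs).continuousWithinAt
    obtain ⟨C, hC⟩ := isCompact_Icc.exists_bound_of_continuousOn hc
    exact ⟨C, fun s => hC s s.2⟩
  -- derivative of s ↦ P s (x s)
  have hder : HasDerivWithinAt (fun s => P s (x s)) (P' t (x t) + P t (x' t)) (Icc τ T) t := by
    rw [hasDerivWithinAt_iff_isLittleO]
    have h1 : (fun s => P s (x t) - P t (x t) - (s - t) • P' t (x t))
        =o[nhdsWithin t (Icc τ T)] (fun s => s - t) :=
      hasDerivWithinAt_iff_isLittleO.1 (hP (x t) t ht)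
    have hxo : (fun s => x s - x t - (s - t) • x' t)
        =o[nhdsWithin t (Icc τ T)] (fun s => s - t) :=
      hasDerivWithinAt_iff_isLittleO.1 (hx t ht)
    have h2 : (fun s => P s (x s - x t - (s - t) • x' t))
        =o[nhdsWithin t (Icc τ T)] (fun s => s - t) := by
      refine (Asymptotics.IsBigO.trans_isLittleO ?_ hxo)
      refine Asymptotics.IsBigO.of_bound M ?_
      filter_upwards [self_mem_nhdsWithin] with s hs
      calc ‖P s (x s - x t - (s - t) • x' t)‖
          ≤ ‖P s‖ * ‖x s - x t - (s - t) • x' t‖ := ContinuousLinearMap.le_opNorm _ _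
        _ ≤ M * ‖x s - x t - (s - t) • x' t‖ :=
            mul_le_mul_of_nonneg_right (hM ⟨s, hs⟩) (norm_nonneg _)
    have h3 : (fun s => (s - t) • (P s (x' t) - P t (x' t)))
        =o[nhdsWithin t (Icc τ T)] (fun s => s - t) := by
      rw [Asymptotics.isLittleO_iff]
      intro ε hε
      have htend : Filter.Tendsto (fun s => P s (x' t)) (nhdsWithin t (Icc τ T))
          (nhds (P t (x' t))) := (hP (x' t) t ht).continuousWithinAt
      have : ∀ᶠ s in nhdsWithin t (Icc τ T), ‖P s (x' t) - P t (x' t)‖ ≤ ε := by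
        have := htend.sub_const (P t (x' t))
        rw [sub_self] at this
        filter_upwards [(this.eventually (Metric.ball_mem_nhds 0 hε))] with s hs
        simpa [dist_eq_norm] using (le_of_lt (mem_ball_zero_iff.1 hs))
      filter_upwards [this] with s hs
      rw [norm_smul]
      calc ‖(s - t : ℝ)‖ * ‖P s (x' t) - P t (x' t)‖ ≤ ‖(s - t : ℝ)‖ * ε :=
            mul_le_mul_of_nonneg_left hs (norm_nonneg _)
        _ = ε * ‖s - t‖ := mul_comm _ _
    have hsum := (h1.add h2).add h3
    refine hsum.congr_left fun s => ?_
    simp only [map_sub, map_smul, smul_sub, smul_add]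
    abel
  -- identify d via uniqueness of the derivative
  have hder2 := hder.inner ℝ (hx t ht)
  have hud : UniqueDiffWithinAt ℝ (Icc τ T) t := uniqueDiffOn_Icc hτT t ht
  have hdeq : d = ⟪P t (x t), x' t⟫ + ⟪P' t (x t) + P t (x' t), x t⟫ := by
    rw [← hd.derivWithin hud, ← hder2.derivWithin hud]
  -- passivity applied to w = P t ẋ − P t G x
  have hw : ι (P t (x' t) - P t (G t (x t))) = Am1 (x t) + B (u t) := by
    rw [map_sub, heq t ht]; abel
  have hpass := hpassive (x t) (u t) _ hw
  rw [← hout t ht] at hpass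
  rw [inner_sub_left] at hpass
  -- symmetry manipulations
  have e1 : ⟪P t (G t (x t)), x t⟫ = ⟪P t (x t), G t (x t)⟫ := by
    rw [hsa t ht, real_inner_comm]
  have e2 : ⟪P t (x t), x' t⟫ = ⟪P t (x' t), x t⟫ := by
    rw [hsa t ht, real_inner_comm]
  rw [inner_add_left] at hdeq
  rw [e1] at hpass
  rw [e2] at hdeq
  linarith
end

section
/- Let (u₁, x₁, y₁) and (u₂, x₂, y₂) be two trajectories (in a linear set of triples) satisfying the energy inequality ⟨P(t)x(t),x(t)⟩ + ∫_τ^t ‖y‖² ≤ ⟨P(τ)x(τ),x(τ)⟩ + ∫_τ^t ‖u‖² + ∫_τ^t ⟨Ṗ x, x⟩ + 2Re ∫_τ^t ⟨P x, G x⟩, where P(t) = P(t)* ≥ δI for some δ > 0, with P, Ṗ, G uniformly bounded on [τ, T]. If x₁(τ) = x₂(τ) and u₁ = u₂, then x₁ = x₂ on [τ, T] and y₁ = y₂ a.e. on [τ, T]. -/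
open Set MeasureTheory
open scoped RealInnerProductSpace

/-! The difference `z = x₁ - x₂` satisfies the energy inequality with `z τ = 0`. Coercivity of `P`
and the bounds on `P, Ṗ, G` turn it into
`δ ‖z t‖² + ∫_τ^t ‖y₁ - y₂‖² ≤ (CP' + 2 CP CG) ∫_τ^t ‖z‖²`,
so Grönwall's inequality for `‖z‖²` forces `z = 0`, and then the output term over `[τ, T]`
vanishes. -/

theorem eq_zero_of_le_mul_integral {h : ℝ → ℝ} {K a b : ℝ} (hab : a ≤ b)
    (hc : ContinuousOn h (Icc a b)) (h0 : ∀ t ∈ Icc a b, 0 ≤ h t)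
    (hle : ∀ t ∈ Icc a b, h t ≤ K * ∫ s in a..t, h s) :
    ∀ t ∈ Icc a b, h t = 0 := by
  -- extend `h` continuously to `ℝ`, so that its primitive is differentiable everywhere
  set g : ℝ → ℝ := fun t => h (projIcc a b hab t)
  have hg : Continuous g :=
    hc.comp_continuous (continuous_subtype_val.comp continuous_projIcc) fun t =>
      (projIcc a b hab t).2
  have hg0 : ∀ t, 0 ≤ g t := fun t => h0 _ (projIcc a b hab t).2
  have hgh : ∀ t ∈ Icc a b, g t = h t := fun t ht => by simp [g, projIcc_of_mem hab ht]
  have hint : ∀ t ∈ Icc a b, ∫ s in a..t, g s = ∫ s in a..t, h s := fun t ht =>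
    intervalIntegral.integral_congr fun s hs => by
      rw [uIcc_of_le ht.1] at hs
      exact hgh s ⟨hs.1, hs.2.trans ht.2⟩
  have hderiv : ∀ t, HasDerivAt (fun u => ∫ s in a..u, g s) (g t) t := fun t =>
    (hg.integral_hasStrictDerivAt a t).hasDerivAt
  have hF : ∀ t ∈ Icc a b, ∫ s in a..t, g s = 0 :=
    eq_zero_of_abs_deriv_le_mul_abs_self_of_eq_zero_right (K := K)
      (fun t _ => (hderiv t).continuousAt.continuousWithinAt)
      (fun t _ => (hderiv t).hasDerivWithinAt) intervalIntegral.integral_same fun t ht => by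
        have ht' : t ∈ Icc a b := Ico_subset_Icc_self ht
        rw [Real.norm_eq_abs, Real.norm_eq_abs, abs_of_nonneg (hg0 t),
          abs_of_nonneg (intervalIntegral.integral_nonneg ht.1 fun s _ => hg0 s), hgh t ht',
          hint t ht']
        exact hle t ht'
  intro t ht
  refine le_antisymm ?_ (h0 t ht)
  simpa [← hint t ht, hF t ht] using hle t ht

/-- No integrability of `f` is needed: otherwise `∫ f = 0` by convention. -/
theorem intervalIntegral.integral_mono_on_of_nonneg_right {f g : ℝ → ℝ} {a b : ℝ} (hab : a ≤ b)
    (hg : IntervalIntegrable g volume a b) (hg0 : ∀ s ∈ Icc a b, 0 ≤ g s)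
    (hfg : ∀ s ∈ Icc a b, f s ≤ g s) :
    ∫ s in a..b, f s ≤ ∫ s in a..b, g s := by
  by_cases hf : IntervalIntegrable f volume a b
  · exact intervalIntegral.integral_mono_on hab hf hg hfg
  · rw [intervalIntegral.integral_undef hf]
    exact intervalIntegral.integral_nonneg hab hg0

theorem ContinuousLinearMap.inner_apply_le_of_opNorm_le {X : Type*} [NormedAddCommGroup X]
    [InnerProductSpace ℝ X] {A B : X →L[ℝ] X} {a b : ℝ} (hA : ‖A‖ ≤ a) (hB : ‖B‖ ≤ b) (z : X) :
    ⟪A z, B z⟫ ≤ a * b * ‖z‖ ^ 2 :=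
  calc ⟪A z, B z⟫ ≤ ‖A z‖ * ‖B z‖ := real_inner_le_norm _ _
    _ ≤ (a * ‖z‖) * (b * ‖z‖) := by
      refine mul_le_mul (A.le_of_opNorm_le hA z) (B.le_of_opNorm_le hB z) (norm_nonneg _) ?_
      exact mul_nonneg ((norm_nonneg _).trans hA) (norm_nonneg _)
    _ = a * b * ‖z‖ ^ 2 := by ring

theorem ae_restrict_Icc_eq_zero_of_intervalIntegral_sq_norm_nonpos {E : Type*}
    [NormedAddCommGroup E] {w : ℝ → E} {a b : ℝ} (hab : a ≤ b)
    (hw : IntervalIntegrable (fun s => ‖w s‖ ^ 2) volume a b)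
    (hle : ∫ s in a..b, ‖w s‖ ^ 2 ≤ 0) :
    ∀ᵐ s ∂(volume.restrict (Icc a b)), w s = 0 := by
  have hzero : ∫ s in a..b, ‖w s‖ ^ 2 = 0 :=
    le_antisymm hle (intervalIntegral.integral_nonneg hab fun s _ => by positivity)
  have hae := (intervalIntegral.integral_eq_zero_iff_of_le_of_nonneg_ae hab
    (Filter.Eventually.of_forall fun s => sq_nonneg ‖w s‖) hw).mp hzero
  rw [← Measure.restrict_congr_set Ioc_ae_eq_Icc]
  filter_upwards [hae] with s hs
  simpa using hs

theorem sq_norm_add_integral_le_of_energy_inequality {X Y : Type*}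
    [NormedAddCommGroup X] [InnerProductSpace ℝ X] [NormedAddCommGroup Y]
    {τ T δ CP CP' CG : ℝ} {P P' G : ℝ → X →L[ℝ] X} {z : ℝ → X} {w : ℝ → Y}
    (hPδ : ∀ t ∈ Icc τ T, ∀ z : X, δ * ‖z‖ ^ 2 ≤ ⟪P t z, z⟫)
    (hPb : ∀ t ∈ Icc τ T, ‖P t‖ ≤ CP) (hP'b : ∀ t ∈ Icc τ T, ‖P' t‖ ≤ CP')
    (hGb : ∀ t ∈ Icc τ T, ‖G t‖ ≤ CG) (hz : ContinuousOn z (Icc τ T)) (hz0 : z τ = 0)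
    (henergy : ∀ t ∈ Icc τ T,
      ⟪P t (z t), z t⟫ + ∫ s in τ..t, ‖w s‖ ^ 2 ≤
        ⟪P τ (z τ), z τ⟫ + (∫ s in τ..t, ⟪P' s (z s), z s⟫) +
          2 * ∫ s in τ..t, ⟪P s (z s), G s (z s)⟫) :
    ∀ t ∈ Icc τ T, δ * ‖z t‖ ^ 2 + ∫ s in τ..t, ‖w s‖ ^ 2 ≤
      (CP' + 2 * (CP * CG)) * ∫ s in τ..t, ‖z s‖ ^ 2 := by
  intro t ht
  have hτ : τ ∈ Icc τ T := ⟨le_rfl, ht.1.trans ht.2⟩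
  have hsub : Icc τ t ⊆ Icc τ T := Icc_subset_Icc_right ht.2
  have hzint : IntervalIntegrable (fun s => ‖z s‖ ^ 2) volume τ t :=
    ((hz.mono hsub).norm.pow 2).intervalIntegrable_of_Icc ht.1
  have hCP : 0 ≤ CP := (norm_nonneg _).trans (hPb τ hτ)
  have hCP' : 0 ≤ CP' := (norm_nonneg _).trans (hP'b τ hτ)
  have hCG : 0 ≤ CG := (norm_nonneg _).trans (hGb τ hτ)
  have hP'int : ∫ s in τ..t, ⟪P' s (z s), z s⟫ ≤ CP' * ∫ s in τ..t, ‖z s‖ ^ 2 := by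
    rw [← intervalIntegral.integral_const_mul]
    refine intervalIntegral.integral_mono_on_of_nonneg_right ht.1 (hzint.const_mul _)
      (fun s _ => by positivity) fun s hs => ?_
    simpa using ContinuousLinearMap.inner_apply_le_of_opNorm_le (hP'b s (hsub hs))
      ContinuousLinearMap.norm_id_le (z s)
  have hGint : ∫ s in τ..t, ⟪P s (z s), G s (z s)⟫ ≤ CP * CG * ∫ s in τ..t, ‖z s‖ ^ 2 := by
    rw [← intervalIntegral.integral_const_mul]
    exact intervalIntegral.integral_mono_on_of_nonneg_right ht.1 (hzint.const_mul _)
      (fun s _ => by positivity) fun s hs =>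
        ContinuousLinearMap.inner_apply_le_of_opNorm_le (hPb s (hsub hs)) (hGb s (hsub hs)) _
  have henergy_t := henergy t ht
  rw [hz0, map_zero, inner_zero_left, zero_add] at henergy_t
  linarith [hPδ t ht (z t)]

theorem uniqueness_from_energy_inequality_general
    {X Y : Type*}
    [NormedAddCommGroup X] [InnerProductSpace ℝ X]
    [NormedAddCommGroup Y]
    (τ T : ℝ) (hτT : τ ≤ T)
    (P P' G : ℝ → X →L[ℝ] X)
    (δ : ℝ) (hδ : 0 < δ)
    (hPδ : ∀ t ∈ Icc τ T, ∀ z : X, δ * ‖z‖ ^ 2 ≤ ⟪P t z, z⟫)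
    (CP CP' CG : ℝ)
    (hPb : ∀ t ∈ Icc τ T, ‖P t‖ ≤ CP)
    (hP'b : ∀ t ∈ Icc τ T, ‖P' t‖ ≤ CP')
    (hGb : ∀ t ∈ Icc τ T, ‖G t‖ ≤ CG)
    (x₁ x₂ : ℝ → X) (y₁ y₂ : ℝ → Y)
    (hx₁ : ContinuousOn x₁ (Icc τ T)) (hx₂ : ContinuousOn x₂ (Icc τ T))
    (hyint : ∀ t ∈ Icc τ T,
      IntervalIntegrable (fun s => ‖y₁ s - y₂ s‖ ^ 2) volume τ t)
    -- the energy inequality for the difference trajectory (zero input, by linearity):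
    (henergy : ∀ t ∈ Icc τ T,
      ⟪P t (x₁ t - x₂ t), x₁ t - x₂ t⟫ + ∫ s in τ..t, ‖y₁ s - y₂ s‖ ^ 2 ≤
        ⟪P τ (x₁ τ - x₂ τ), x₁ τ - x₂ τ⟫ +
          (∫ s in τ..t, ⟪P' s (x₁ s - x₂ s), x₁ s - x₂ s⟫) +
          2 * ∫ s in τ..t, ⟪P s (x₁ s - x₂ s), G s (x₁ s - x₂ s)⟫)
    (hinit : x₁ τ = x₂ τ) :
    (∀ t ∈ Icc τ T, x₁ t = x₂ t) ∧
      (∀ᵐ s ∂(volume.restrict (Icc τ T)), y₁ s = y₂ s) := by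
  have hbound := sq_norm_add_integral_le_of_energy_inequality (z := fun t => x₁ t - x₂ t)
    hPδ hPb hP'b hGb (hx₁.sub hx₂) (sub_eq_zero.mpr hinit) henergy
  have hzero : ∀ t ∈ Icc τ T, ‖x₁ t - x₂ t‖ ^ 2 = 0 :=
    eq_zero_of_le_mul_integral (K := (CP' + 2 * (CP * CG)) / δ) hτT
      ((hx₁.sub hx₂).norm.pow 2) (fun _ _ => by positivity) fun t ht => by
        have hdiss := intervalIntegral.integral_nonneg (μ := volume) ht.1 fun s _ =>
          sq_nonneg ‖y₁ s - y₂ s‖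
        rw [div_mul_eq_mul_div, le_div_iff₀ hδ]
        linarith [hbound t ht]
  have hTmem : T ∈ Icc τ T := ⟨hτT, le_rfl⟩
  have hzint : ∫ s in τ..T, ‖x₁ s - x₂ s‖ ^ 2 = 0 := by
    rw [intervalIntegral.integral_congr (g := fun _ => 0) fun s hs =>
      hzero s (uIcc_of_le hτT ▸ hs)]
    simp
  refine ⟨fun t ht => by simpa [sub_eq_zero] using hzero t ht, ?_⟩
  refine (ae_restrict_Icc_eq_zero_of_intervalIntegral_sq_norm_nonpos hτT (hyint T hTmem) ?_).mono
    fun s hs => sub_eq_zero.mp hs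
  simpa [hzint, hzero T hTmem] using hbound T hTmem

/-- uniqueness of trajectories satisfying the time-varying energy inequality.
If the difference of two trajectories (with the same initial state and input) satisfies the
energy inequality with zero input, where `P(t) = P(t)* ≥ δ I`, `δ > 0`, and `P, Ṗ, G` are
uniformly bounded, then the states coincide and the outputs agree almost everywhere. -/
theorem uniqueness_from_energy_inequality
    {X Y : Type*}
    [NormedAddCommGroup X] [InnerProductSpace ℝ X] [CompleteSpace X]
    [NormedAddCommGroup Y] [InnerProductSpace ℝ Y] [CompleteSpace Y]
    (τ T : ℝ) (hτT : τ ≤ T)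
    (P P' G : ℝ → X →L[ℝ] X)
    (hsa : ∀ t ∈ Icc τ T, ∀ u v : X, ⟪P t u, v⟫ = ⟪u, P t v⟫)
    (δ : ℝ) (hδ : 0 < δ)
    (hPδ : ∀ t ∈ Icc τ T, ∀ z : X, δ * ‖z‖ ^ 2 ≤ ⟪P t z, z⟫)
    (CP CP' CG : ℝ)
    (hPb : ∀ t ∈ Icc τ T, ‖P t‖ ≤ CP)
    (hP'b : ∀ t ∈ Icc τ T, ‖P' t‖ ≤ CP')
    (hGb : ∀ t ∈ Icc τ T, ‖G t‖ ≤ CG)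
    (hPc : ∀ z : X, ContinuousOn (fun t => P t z) (Icc τ T))
    (x₁ x₂ : ℝ → X) (y₁ y₂ : ℝ → Y)
    (hx₁ : ContinuousOn x₁ (Icc τ T)) (hx₂ : ContinuousOn x₂ (Icc τ T))
    (hyint : ∀ t ∈ Icc τ T,
      IntervalIntegrable (fun s => ‖y₁ s - y₂ s‖ ^ 2) volume τ t)
    -- the energy inequality for the difference trajectory (zero input, by linearity):
    (henergy : ∀ t ∈ Icc τ T,
      ⟪P t (x₁ t - x₂ t), x₁ t - x₂ t⟫ + ∫ s in τ..t, ‖y₁ s - y₂ s‖ ^ 2 ≤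
        ⟪P τ (x₁ τ - x₂ τ), x₁ τ - x₂ τ⟫ +
          (∫ s in τ..t, ⟪P' s (x₁ s - x₂ s), x₁ s - x₂ s⟫) +
          2 * ∫ s in τ..t, ⟪P s (x₁ s - x₂ s), G s (x₁ s - x₂ s)⟫)
    (hinit : x₁ τ = x₂ τ) :
    (∀ t ∈ Icc τ T, x₁ t = x₂ t) ∧
      (∀ᵐ s ∂(volume.restrict (Icc τ T)), y₁ s = y₂ s) :=
  uniqueness_from_energy_inequality_general τ T hτT P P' G δ hδ hPδ CP CP' CG hPb hP'b hGb x₁ x₂ y₁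
    y₂ hx₁ hx₂ hyint henergy hinit
end
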